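/- arXiv:1411.5295 — 2 statements merged into one kernel-verified Lean document; each statement's English description precedes it below -/
import Mathlib

section
/- The area of the set U = {(x,y) ∈ ℝ² : max(x·log 2 + y·log 3, 0) + max(-x·log 2, 0) + max(-y·log 3, 0) ≤ 1} equals 3/((log 2)(log 3)). -/
/-!
The set is the preimage of the hexagon `H = {(u, v) | max (u + v) 0 + max (-u) 0 + max (-v) 0 ≤ 1}`
under the diagonal scaling `(x, y) ↦ (x log 2, y log 3)`, which divides areas by `log 2 · log 3`.
The vertical slice of `H` over `u ∈ [-1, 1]` is an interval of length `2 - |u|`, so `H` has area 3.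
-/

open Real MeasureTheory Set

def hexagon : Set (ℝ × ℝ) :=
  {p | max (p.1 + p.2) 0 + max (-p.1) 0 + max (-p.2) 0 ≤ 1}

theorem measurableSet_hexagon : MeasurableSet hexagon :=
  measurableSet_le (by fun_prop) measurable_const

theorem mk_mem_hexagon_iff (u v : ℝ) :
    (u, v) ∈ hexagon ↔ |u| ≤ 1 ∧ v ∈ Icc (-1 - min u 0) (1 - max u 0) := by
  change max (u + v) 0 + max (-u) 0 + max (-v) 0 ≤ 1 ↔ _
  rw [mem_Icc, abs_le]
  grind

theorem volume_preimage_mk_hexagon (u : ℝ) :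
    volume (Prod.mk u ⁻¹' hexagon) =
      (Icc (-1) 1).indicator (fun u => ENNReal.ofReal (2 - |u|)) u := by
  by_cases hu : |u| ≤ 1
  · have : Prod.mk u ⁻¹' hexagon = Icc (-1 - min u 0) (1 - max u 0) := by
      ext v; simp [mk_mem_hexagon_iff, hu]
    rw [this, Real.volume_Icc, indicator_of_mem (mem_Icc.2 (abs_le.1 hu))]
    congr 1
    rcases le_total u 0 with h | h <;> simp [h, abs_of_nonpos, abs_of_nonneg] <;> ring
  · have : Prod.mk u ⁻¹' hexagon = ∅ := by
      ext v; simp [mk_mem_hexagon_iff, hu]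
    rw [this, measure_empty, indicator_of_notMem (fun h => hu (abs_le.2 (mem_Icc.1 h)))]

theorem intervalIntegral_abs_of_nonpos_of_nonneg {a b : ℝ} (ha : a ≤ 0) (hb : 0 ≤ b) :
    ∫ u in a..b, |u| = (a ^ 2 + b ^ 2) / 2 := by
  have hint (a b : ℝ) : IntervalIntegrable (|·|) volume a b := continuous_abs.intervalIntegrable a b
  rw [← intervalIntegral.integral_add_adjacent_intervals (hint a 0) (hint 0 b),
    intervalIntegral.integral_congr (g := fun u => -u) fun u hu => abs_of_nonpos (by simp_all),
    intervalIntegral.integral_congr (g := fun u => u) fun u hu => abs_of_nonneg (by simp_all),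
    intervalIntegral.integral_neg, integral_id, integral_id]
  ring

theorem volume_hexagon : volume hexagon = 3 := by
  have hcont : Continuous fun u : ℝ => 2 - |u| := by fun_prop
  calc volume hexagon = ∫⁻ u, volume (Prod.mk u ⁻¹' hexagon) := by
        rw [Measure.volume_eq_prod, Measure.prod_apply measurableSet_hexagon]
    _ = ∫⁻ u in Icc (-1) 1, ENNReal.ofReal (2 - |u|) := by
        simp_rw [volume_preimage_mk_hexagon, lintegral_indicator measurableSet_Icc]
    _ = ENNReal.ofReal (∫ u in (-1)..1, (2 - |u|)) := by
        rw [intervalIntegral.integral_of_le (by norm_num), ← integral_Icc_eq_integral_Ioc,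
          ofReal_integral_eq_lintegral_ofReal hcont.integrableOn_Icc]
        refine (ae_restrict_iff' measurableSet_Icc).2 (ae_of_all _ fun u hu => ?_)
        have := abs_le.2 hu
        simp only [Pi.zero_apply]; linarith
    _ = 3 := by
        rw [intervalIntegral.integral_sub intervalIntegrable_const
            (continuous_abs.intervalIntegrable _ _),
          intervalIntegral_abs_of_nonpos_of_nonneg (by norm_num) zero_le_one]
        norm_num

theorem volume_preimage_prodMap_mul {a b : ℝ} (ha : a ≠ 0) (hb : b ≠ 0) {s : Set (ℝ × ℝ)}
    (hs : MeasurableSet s) :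
    volume (Prod.map (· * a) (· * b) ⁻¹' s) = ENNReal.ofReal |(a * b)⁻¹| * volume s := by
  rw [← Measure.map_apply (by fun_prop) hs, Measure.volume_eq_prod,
    ← Measure.map_prod_map _ _ (by fun_prop) (by fun_prop), Real.map_volume_mul_right ha,
    Real.map_volume_mul_right hb, Measure.prod_smul_left, Measure.prod_smul_right]
  simp only [Measure.smul_apply, smul_eq_mul, mul_inv, abs_mul, ENNReal.ofReal_mul (abs_nonneg _)]
  ring

theorem times2times3_unit_ball_area :
    volume {p : ℝ × ℝ |
        max (p.1 * Real.log 2 + p.2 * Real.log 3) 0 + max (-(p.1 * Real.log 2)) 0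
          + max (-(p.2 * Real.log 3)) 0 ≤ 1}
      = ENNReal.ofReal (3 / (Real.log 2 * Real.log 3)) := by
  have hlog2 : 0 < Real.log 2 := Real.log_pos one_lt_two
  have hlog3 : 0 < Real.log 3 := Real.log_pos (by norm_num)
  change volume (Prod.map (· * Real.log 2) (· * Real.log 3) ⁻¹' hexagon) = _
  rw [volume_preimage_prodMap_mul hlog2.ne' hlog3.ne' measurableSet_hexagon, volume_hexagon,
    abs_of_pos (by positivity), ← ENNReal.ofReal_ofNat 3, ← ENNReal.ofReal_mul (by positivity)]
  congr 1
  ring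
end

section
/- The area of the set U = {(x,y) ∈ ℝ² : max((x+y)·log 2, 0) + max(-x·log 2, 0) + max(-y·log 2, 0) ≤ 1} equals 3/(log 2)². -/
/-!
Scaling by `log 2` carries the set onto the hexagon `|x| ≤ 1, |y| ≤ 1, |x + y| ≤ 1`, so its area
is `(log 2)⁻²` times that of the hexagon. The vertical section of the hexagon over `x ∈ [-1, 1]`
is an interval of length `2 - |x|`, and `∫₋₁¹ (2 - |x|) dx = 3`.
-/

open MeasureTheory Set

theorem volume_region_between_cc_eq_lintegral {α : Type*} [MeasurableSpace α] (μ : Measure α)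
    {f g : α → ℝ} {s : Set α} (hf : Measurable f) (hg : Measurable g) (hs : MeasurableSet s) :
    μ.prod volume {p : α × ℝ | p.1 ∈ s ∧ p.2 ∈ Icc (f p.1) (g p.1)} =
      ∫⁻ x in s, ENNReal.ofReal (g x - f x) ∂μ := by
  rw [Measure.prod_apply (measurableSet_region_between_cc hf hg hs), ← lintegral_indicator hs]
  congr 1 with x
  by_cases hx : x ∈ s
  · rw [indicator_of_mem hx, ← Real.volume_Icc]
    congr 1 with y
    simp [hx]
  · simp [hx]

theorem intervalIntegral.integral_abs_neg_to_self {a : ℝ} (ha : 0 ≤ a) :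
    ∫ x in (-a)..a, |x| = a ^ 2 := by
  have hright : ∫ x in (0 : ℝ)..a, |x| = a ^ 2 / 2 := by
    rw [intervalIntegral.integral_congr (g := fun x => x) fun x hx => abs_of_nonneg (by
      rw [uIcc_of_le ha] at hx; exact hx.1)]
    simp [integral_id]
  have hleft : ∫ x in (-a)..0, |x| = a ^ 2 / 2 := by
    have := intervalIntegral.integral_comp_neg (a := 0) (b := a) (fun x => |x|)
    simp only [abs_neg, neg_zero] at this
    rw [← this, hright]
  rw [← intervalIntegral.integral_add_adjacent_intervals (b := 0)
    (continuous_abs.intervalIntegrable _ _) (continuous_abs.intervalIntegrable _ _), hleft, hright]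
  ring

def unitHexagon : Set (ℝ × ℝ) := {p | |p.1| ≤ 1 ∧ |p.2| ≤ 1 ∧ |p.1 + p.2| ≤ 1}

theorem max_add_max_neg_add_max_neg_le_one_iff (x y : ℝ) :
    max (x + y) 0 + max (-x) 0 + max (-y) 0 ≤ 1 ↔ |x| ≤ 1 ∧ |y| ≤ 1 ∧ |x + y| ≤ 1 := by
  simp only [abs_le, max_def]
  split_ifs <;> constructor <;> intro h <;> grind

theorem unitHexagon_eq_region_between :
    unitHexagon = {p | p.1 ∈ Icc (-1) 1 ∧ p.2 ∈ Icc (-1 + max (-p.1) 0) (1 - max p.1 0)} := by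
  ext ⟨x, y⟩
  simp only [unitHexagon, mem_ofPred_eq, mem_Icc, abs_le, max_def]
  split_ifs <;> constructor <;> intro h <;> grind

theorem volume_unitHexagon : volume unitHexagon = 3 := by
  have hwidth (x : ℝ) : 1 - max x 0 - (-1 + max (-x) 0) = 2 - |x| := by
    rw [← max_zero_add_max_neg_zero_eq_abs_self x]
    ring
  have hnonneg : ∀ x ∈ Icc (-1 : ℝ) 1, 0 ≤ 2 - |x| := fun x hx => by
    have := abs_le.2 hx
    linarith
  have hint : IntegrableOn (fun x : ℝ => 2 - |x|) (Icc (-1) 1) :=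
    (continuous_const.sub continuous_abs).integrableOn_Icc
  rw [unitHexagon_eq_region_between, Measure.volume_eq_prod,
    volume_region_between_cc_eq_lintegral _ (f := fun x => -1 + max (-x) 0)
      (g := fun x => 1 - max x 0) (by fun_prop) (by fun_prop) measurableSet_Icc]
  simp_rw [hwidth]
  rw [← ofReal_integral_eq_lintegral_ofReal hint
      ((ae_restrict_iff' measurableSet_Icc).2 (ae_of_all _ hnonneg)),
    integral_Icc_eq_integral_Ioc, ← intervalIntegral.integral_of_le (by norm_num),
    intervalIntegral.integral_sub intervalIntegrable_const (continuous_abs.intervalIntegrable _ _),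
    intervalIntegral.integral_abs_neg_to_self zero_le_one]
  norm_num

theorem ledrappier_unit_ball_area :
    volume {p : ℝ × ℝ |
        max ((p.1 + p.2) * Real.log 2) 0 + max (-(p.1 * Real.log 2)) 0
          + max (-(p.2 * Real.log 2)) 0 ≤ 1}
      = ENNReal.ofReal (3 / (Real.log 2) ^ 2) := by
  have hlog : 0 < Real.log 2 := Real.log_pos one_lt_two
  have hball : {p : ℝ × ℝ | max ((p.1 + p.2) * Real.log 2) 0 + max (-(p.1 * Real.log 2)) 0
      + max (-(p.2 * Real.log 2)) 0 ≤ 1} = (Real.log 2 • ·) ⁻¹' unitHexagon := by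
    ext ⟨x, y⟩
    simp only [mem_preimage, Prod.smul_mk, smul_eq_mul, unitHexagon, mem_ofPred_eq,
      ← max_add_max_neg_add_max_neg_le_one_iff]
    ring_nf
  rw [hball, Measure.addHaar_preimage_smul volume hlog.ne', volume_unitHexagon,
    ← ENNReal.ofReal_ofNat 3, ← ENNReal.ofReal_mul (abs_nonneg _)]
  simp [Module.finrank_prod, abs_of_pos hlog, div_eq_inv_mul]
end
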